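/- arXiv:2601.22413 — 3 statements merged into one kernel-verified Lean document; each statement's English description precedes it below -/
import Mathlib

section
/- For all real x > 0, the exponential generating function identity holds: ∑_{k=1}^∞ H_k x^k / k! = e^x (log x + γ + E_1(x)), where H_k is the k-th harmonic number, γ is the Euler–Mascheroni constant, and E_1(x) = ∫_x^∞ e^{-t}/t dt is the exponential integral. -/
/-!
Since `H_n = ∫₀¹ (1 - tⁿ)/(1 - t) dt`, summing the series under the integral sign gives
`∫₀¹ (eˣ - e^{xt})/(1 - t) dt`, which the substitution `u = x(1 - t)` turns into
`eˣ ∫₀ˣ (1 - e^{-u})/u du`. To evaluate the last integral, integrate `∫₀^∞ e^{-t} log t = Γ'(1) = -γ`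
by parts separately on `(0, x]` (antiderivative `(1 - e^{-t}) log t`) and on `(x, ∞)`
(antiderivative `-e^{-t} log t`); the two boundary terms at `x` add up to `log x`.
-/

open Real MeasureTheory

/-- The `k`-th harmonic number `H_k = ∑_{j=1}^k 1/j`. -/
noncomputable def H (k : ℕ) : ℝ := ∑ j ∈ Finset.range k, (1 : ℝ) / (j + 1)

/-- The exponential integral `E_1(x) = ∫_x^∞ e^{-t}/t dt`. -/
noncomputable def E1 (x : ℝ) : ℝ := ∫ t in Set.Ioi x, Real.exp (-t) / t

open Set Filter Topology
open scoped Nat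

lemma H_eq_integral_geom_sum (n : ℕ) : H n = ∫ t in 0..1, ∑ j ∈ Finset.range n, t ^ j := by
  rw [intervalIntegral.integral_finsetSum fun j _ => (continuous_pow j).intervalIntegrable 0 1]
  simp [H, integral_pow]

lemma hasSum_pow_div_factorial_mul_geom_sum (x : ℝ) {t : ℝ} (ht : t ≠ 1) :
    HasSum (fun n => x ^ n / n ! * ∑ j ∈ Finset.range n, t ^ j)
      ((exp x - exp (x * t)) / (1 - t)) := by
  have hexp (y : ℝ) : HasSum (fun n => y ^ n / n !) (exp y) := by
    simpa [← exp_eq_exp_ℝ] using NormedSpace.expSeries_div_hasSum_exp y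
  refine ((hexp x).sub (hexp (x * t))).div_const (1 - t) |>.congr_fun fun n => ?_
  rw [geom_sum_eq ht, mul_pow]
  field_simp [sub_ne_zero.2 ht, sub_ne_zero.2 ht.symm]
  ring

lemma norm_pow_div_factorial_mul_geom_sum_le (x : ℝ) (n : ℕ) {t : ℝ} (ht : t ∈ Icc 0 1) :
    ‖x ^ n / n ! * ∑ j ∈ Finset.range n, t ^ j‖ ≤ (2 * |x|) ^ n / n ! := by
  -- the crude bound `n ≤ 2 ^ n` keeps the majorant an exponential series
  have hsum : ‖∑ j ∈ Finset.range n, t ^ j‖ ≤ 2 ^ n := calc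
    _ ≤ ∑ j ∈ Finset.range n, ‖t ^ j‖ := norm_sum_le _ _
    _ ≤ ∑ _j ∈ Finset.range n, (1 : ℝ) := Finset.sum_le_sum fun j _ => by
      rw [norm_pow, norm_of_nonneg ht.1]; exact pow_le_one₀ ht.1 ht.2
    _ ≤ 2 ^ n := by
      rw [Finset.sum_const, Finset.card_range, nsmul_one]
      exact_mod_cast Nat.lt_two_pow_self.le
  rw [norm_mul, norm_div, norm_pow, norm_eq_abs, mul_pow, Real.norm_natCast, div_mul_eq_mul_div,
    mul_comm (2 ^ n)]
  gcongr

lemma integral_exp_sub_exp_mul_div_one_sub (x : ℝ) :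
    ∫ t in 0..1, (exp x - exp (x * t)) / (1 - t) = exp x * ∫ u in 0..x, (1 - exp (-u)) / u := by
  have hsubst (t : ℝ) : (exp x - exp (x * t)) / (1 - t) =
      exp x * (x * ((1 - exp (-(x - x * t))) / (x - x * t))) := by
    rcases eq_or_ne t 1 with rfl | ht
    · simp
    rcases eq_or_ne x 0 with rfl | hx
    · simp
    have hexp : exp (-(x - x * t)) = exp (x * t) / exp x := by rw [← exp_sub]; ring_nf
    rw [hexp]
    field_simp [sub_ne_zero.2 ht.symm]
  simp_rw [hsubst]
  rw [intervalIntegral.integral_const_mul, intervalIntegral.integral_const_mul, ← smul_eq_mul x,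
    intervalIntegral.smul_integral_comp_sub_mul (fun u => (1 - exp (-u)) / u)]
  simp

theorem hasSum_H_mul_pow_div_factorial (x : ℝ) :
    HasSum (fun n => H n * x ^ n / n !) (exp x * ∫ u in 0..x, (1 - exp (-u)) / u) := by
  rw [← integral_exp_sub_exp_mul_div_one_sub]
  set F : ℕ → ℝ → ℝ := fun n t => x ^ n / n ! * ∑ j ∈ Finset.range n, t ^ j
  have hF_int (n : ℕ) : IntegrableOn (F n) (Ioc 0 1) := Continuous.integrableOn_Ioc (by fun_prop)
  have hF_sum : Summable fun n => ∫ t in Ioc 0 1, ‖F n t‖ := by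
    refine (summable_pow_div_factorial (2 * |x|)).of_nonneg_of_le
      (fun n => integral_nonneg fun _ => norm_nonneg _) fun n => ?_
    calc ∫ t in Ioc 0 1, ‖F n t‖ ≤ ‖∫ t in Ioc 0 1, ‖F n t‖‖ := le_abs_self _
      _ ≤ (2 * |x|) ^ n / n ! * volume.real (Ioc (0 : ℝ) 1) :=
        norm_setIntegral_le_of_norm_le_const measure_Ioc_lt_top fun t ht => by
          rw [norm_norm]
          exact norm_pow_div_factorial_mul_geom_sum_le x n (Ioc_subset_Icc_self ht)
      _ = (2 * |x|) ^ n / n ! := by simp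
  have h := hasSum_integral_of_summable_integral_norm hF_int hF_sum
  rw [integral_Ioc_eq_integral_Ioo, setIntegral_congr_fun measurableSet_Ioo
    fun t ht => (hasSum_pow_div_factorial_mul_geom_sum x ht.2.ne).tsum_eq,
    ← integral_Ioc_eq_integral_Ioo, ← intervalIntegral.integral_of_le zero_le_one] at h
  refine h.congr_fun fun n => ?_
  rw [integral_const_mul, ← intervalIntegral.integral_of_le zero_le_one, ← H_eq_integral_geom_sum]
  ring

lemma abs_log_le_self_add_inv {t : ℝ} (ht : 0 < t) : |log t| ≤ t + t⁻¹ := by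
  rcases le_total 1 t with h1 | h1
  · rw [abs_of_nonneg (log_nonneg h1)]
    linarith [log_le_self ht.le, inv_pos.2 ht]
  · rw [abs_of_nonpos (log_nonpos ht.le h1), ← log_inv]
    linarith [log_le_self (inv_pos.2 ht).le]

lemma integrableOn_exp_neg_div_Ioi {x : ℝ} (hx : 0 < x) :
    IntegrableOn (fun t => exp (-t) / t) (Ioi x) := by
  refine Integrable.mono' ((integrableOn_exp_neg_Ioi x).const_mul x⁻¹) ?_ ?_
  · exact (ContinuousOn.div (by fun_prop) continuousOn_id fun t ht => (hx.trans ht).ne')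
      |>.aestronglyMeasurable measurableSet_Ioi
  · refine (ae_restrict_iff' measurableSet_Ioi).2 (Eventually.of_forall fun t ht => ?_)
    have ht0 : 0 < t := hx.trans ht
    rw [norm_of_nonneg (by positivity), div_eq_mul_inv, mul_comm]
    gcongr
    exact ht.le

lemma integrableOn_exp_neg_mul_log_Ioi {x : ℝ} (hx : 0 < x) :
    IntegrableOn (fun t => exp (-t) * log t) (Ioi x) := by
  have hGamma : IntegrableOn (fun t => exp (-t) * t) (Ioi x) := by
    refine ((GammaIntegral_convergent two_pos).mono_set (Ioi_subset_Ioi hx.le)).congr_fun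
      (fun t _ => ?_) measurableSet_Ioi
    norm_num
  refine Integrable.mono' (hGamma.add (integrableOn_exp_neg_div_Ioi hx)) ?_ ?_
  · exact (ContinuousOn.mul (by fun_prop) (continuousOn_log.mono fun t ht => (hx.trans ht).ne'))
      |>.aestronglyMeasurable measurableSet_Ioi
  · refine (ae_restrict_iff' measurableSet_Ioi).2 (Eventually.of_forall fun t ht => ?_)
    rw [Pi.add_apply, norm_mul, norm_of_nonneg (exp_pos _).le, norm_eq_abs, div_eq_mul_inv,
      ← mul_add]
    gcongr
    exact abs_log_le_self_add_inv (hx.trans ht)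

lemma intervalIntegrable_exp_neg_mul_log (a b : ℝ) :
    IntervalIntegrable (fun t => exp (-t) * log t) volume a b :=
  (intervalIntegral.intervalIntegrable_log' (a := a) (b := b)).continuousOn_mul (by fun_prop)

lemma intervalIntegrable_one_sub_exp_neg_div {x : ℝ} (hx : 0 ≤ x) :
    IntervalIntegrable (fun t => (1 - exp (-t)) / t) volume 0 x := by
  rw [intervalIntegrable_iff_integrableOn_Ioc_of_le hx]
  refine Integrable.mono' (integrable_const 1) ?_ ?_
  · exact (ContinuousOn.div (by fun_prop) continuousOn_id fun t ht => ht.1.ne').aestronglyMeasurable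
      measurableSet_Ioc
  · refine (ae_restrict_iff' measurableSet_Ioc).2 (Eventually.of_forall fun t ht => ?_)
    have h1 : 0 ≤ 1 - exp (-t) := by linarith [exp_le_one_iff.2 (neg_nonpos.2 ht.1.le)]
    rw [norm_of_nonneg (div_nonneg h1 ht.1.le), div_le_one ht.1]
    linarith [add_one_le_exp (-t)]

lemma integral_Ioi_zero_exp_neg_mul_log :
    ∫ t in Ioi 0, exp (-t) * log t = -eulerMascheroniConstant := by
  have hGammaIntegral := Complex.hasDerivAt_GammaIntegral (s := 1) one_pos
  have hGamma : HasDerivAt Complex.Gamma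
      (∫ t : ℝ in Ioi 0, (t : ℂ) ^ ((1 : ℂ) - 1) * (log t * exp (-t))) 1 := by
    refine hGammaIntegral.congr_of_eventuallyEq ?_
    filter_upwards [(Complex.continuous_re.isOpen_preimage _ isOpen_Ioi).mem_nhds
      (by simp : (1 : ℂ) ∈ Complex.re ⁻¹' Ioi 0)] with s hs using Complex.Gamma_eq_integral hs
  have h := hGamma.unique Complex.hasDerivAt_Gamma_one
  rw [← Complex.ofReal_inj, Complex.ofReal_neg, ← h, ← integral_complex_ofReal]
  refine setIntegral_congr_fun measurableSet_Ioi fun t _ => ?_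
  push_cast
  simp [mul_comm]

lemma tendsto_one_sub_exp_neg_mul_log_nhdsGT_zero :
    Tendsto (fun t => (1 - exp (-t)) * log t) (𝓝[>] 0) (𝓝 0) := by
  have h := (tendsto_log_mul_rpow_nhdsGT_zero one_pos).abs
  simp only [rpow_one, abs_zero] at h
  refine squeeze_zero_norm' ?_ h
  filter_upwards [self_mem_nhdsWithin] with t (ht : 0 < t)
  have h1 : 0 ≤ 1 - exp (-t) := by linarith [exp_le_one_iff.2 (neg_nonpos.2 ht.le)]
  rw [norm_mul, norm_of_nonneg h1, norm_eq_abs, abs_mul, abs_of_pos ht, mul_comm]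
  gcongr
  linarith [add_one_le_exp (-t)]

lemma integral_exp_neg_mul_log {x : ℝ} (hx : 0 < x) :
    ∫ t in 0..x, exp (-t) * log t = (1 - exp (-x)) * log x - ∫ t in 0..x, (1 - exp (-t)) / t := by
  have hderiv : ∀ t ∈ Ioo 0 x, HasDerivAt (fun t => (1 - exp (-t)) * log t)
      (exp (-t) * log t + (1 - exp (-t)) / t) t := fun t ht =>
    (((hasDerivAt_neg t).exp.const_sub 1).mul (hasDerivAt_log ht.1.ne')).congr_deriv (by ring)
  have hright : Tendsto (fun t => (1 - exp (-t)) * log t) (𝓝[<] x) (𝓝 ((1 - exp (-x)) * log x)) :=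
    ((ContinuousAt.mul (by fun_prop) (continuousAt_log hx.ne')).tendsto).mono_left
      nhdsWithin_le_nhds
  have h := intervalIntegral.integral_eq_sub_of_hasDerivAt_of_tendsto hx hderiv
    ((intervalIntegrable_exp_neg_mul_log 0 x).add (intervalIntegrable_one_sub_exp_neg_div hx.le))
    tendsto_one_sub_exp_neg_mul_log_nhdsGT_zero hright
  rw [intervalIntegral.integral_add (intervalIntegrable_exp_neg_mul_log 0 x)
    (intervalIntegrable_one_sub_exp_neg_div hx.le)] at h
  linarith

lemma integral_Ioi_exp_neg_mul_log {x : ℝ} (hx : 0 < x) :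
    ∫ t in Ioi x, exp (-t) * log t = exp (-x) * log x + E1 x := by
  have hderiv : ∀ t ∈ Ici x, HasDerivAt (fun t => -(exp (-t) * log t))
      (exp (-t) * log t - exp (-t) / t) t := fun t ht =>
    ((hasDerivAt_neg t).exp.mul (hasDerivAt_log (hx.trans_le ht).ne')).neg.congr_deriv (by ring)
  have htop : Tendsto (fun t => -(exp (-t) * log t)) atTop (𝓝 0) := by
    have h := tendsto_pow_mul_exp_neg_atTop_nhds_zero 1
    refine squeeze_zero_norm' ?_ h
    filter_upwards [eventually_ge_atTop 1] with t ht
    rw [norm_neg, norm_mul, norm_of_nonneg (exp_pos _).le, norm_of_nonneg (log_nonneg ht),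
      pow_one, mul_comm]
    gcongr
    exact log_le_self (zero_le_one.trans ht)
  have h := integral_Ioi_of_hasDerivAt_of_tendsto' hderiv
    ((integrableOn_exp_neg_mul_log_Ioi hx).sub (integrableOn_exp_neg_div_Ioi hx)) htop
  rw [integral_sub (integrableOn_exp_neg_mul_log_Ioi hx) (integrableOn_exp_neg_div_Ioi hx)] at h
  rw [E1]
  linarith

theorem integral_one_sub_exp_neg_div {x : ℝ} (hx : 0 < x) :
    ∫ t in 0..x, (1 - exp (-t)) / t = log x + eulerMascheroniConstant + E1 x := by
  have hsplit := setIntegral_union (Ioc_disjoint_Ioi le_rfl) measurableSet_Ioi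
    ((intervalIntegrable_iff_integrableOn_Ioc_of_le hx.le).1 (intervalIntegrable_exp_neg_mul_log 0 x))
    (integrableOn_exp_neg_mul_log_Ioi hx)
  rw [Ioc_union_Ioi_eq_Ioi hx.le, integral_Ioi_zero_exp_neg_mul_log,
    ← intervalIntegral.integral_of_le hx.le, integral_exp_neg_mul_log hx,
    integral_Ioi_exp_neg_mul_log hx] at hsplit
  linarith

theorem egf_harmonic (x : ℝ) (hx : 0 < x) :
    ∑' k : ℕ, H (k + 1) * x ^ (k + 1) / (Nat.factorial (k + 1)) =
      Real.exp x * (Real.log x + Real.eulerMascheroniConstant + E1 x) := by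
  have h := (hasSum_nat_add_iff' 1).2 (hasSum_H_mul_pow_div_factorial x)
  rw [integral_one_sub_exp_neg_div hx] at h
  simpa [H] using h.tsum_eq
end

section
/- For all real x > 0, ∑_{k=1}^∞ H_k x^k / k! = e^x ∫_0^x (1 - e^{-t})/t dt, where H_k is the k-th harmonic number. -/
/-! Write `eˣ (1 - e⁻ᵗ) / t = (eˣ - eˣ⁻ᵗ) / t` and expand both exponentials: the `m`-th term
`(xᵐ - (x - t)ᵐ) / (t m!) = ∑_{i<m} (x - t)ⁱ x^(m-1-i) / m!` is a polynomial in `t`, and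
integrating it over `[0, x]` gives `Hₘ xᵐ / m!`. On that interval the `m`-th term is bounded by
`m |x|^(m-1) / m!`, a summable bound, so dominated convergence lets us integrate termwise. -/

open Real MeasureTheory

open Finset Nat

theorem hasSum_geom_sum₂_div_factorial {x y : ℝ} (hxy : x ≠ y) :
    HasSum (fun m => (∑ i ∈ range m, y ^ i * x ^ (m - 1 - i)) / m !)
      ((exp x - exp y) / (x - y)) := by
  have hsub :=
    (NormedSpace.expSeries_div_hasSum_exp x).sub (NormedSpace.expSeries_div_hasSum_exp y)
  rw [← Real.exp_eq_exp_ℝ] at hsub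
  refine (hsub.div_const (x - y)).congr_fun fun m => ?_
  rw [geom_sum₂_comm, ← sub_div, ← geom_sum₂_mul, div_div, mul_div_mul_comm,
    div_self (sub_ne_zero.2 hxy), mul_one]

theorem norm_geom_sum₂_le {x y r : ℝ} (hx : |x| ≤ r) (hy : |y| ≤ r) (m : ℕ) :
    ‖∑ i ∈ range m, y ^ i * x ^ (m - 1 - i)‖ ≤ m * r ^ (m - 1) := by
  calc ‖∑ i ∈ range m, y ^ i * x ^ (m - 1 - i)‖
      ≤ ∑ i ∈ range m, ‖y ^ i * x ^ (m - 1 - i)‖ := norm_sum_le _ _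
    _ ≤ ∑ i ∈ range m, r ^ (m - 1) := by
        refine sum_le_sum fun i hi => ?_
        rw [norm_mul, norm_pow, norm_pow, Real.norm_eq_abs, Real.norm_eq_abs,
          ← pow_mul_pow_sub r (Nat.le_sub_one_of_lt (mem_range.1 hi))]
        have hr : 0 ≤ r := (abs_nonneg x).trans hx
        gcongr
    _ = m * r ^ (m - 1) := by rw [sum_const, card_range, nsmul_eq_mul]

theorem summable_mul_pow_pred_div_factorial (r : ℝ) :
    Summable (fun m : ℕ => m * r ^ (m - 1) / m !) := by
  refine (summable_nat_add_iff 1).mp ((Real.summable_pow_div_factorial r).congr fun m => ?_)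
  rw [factorial_succ]
  push_cast
  field_simp

theorem integral_geom_sum₂_sub (x : ℝ) (m : ℕ) :
    ∫ t in (0 : ℝ)..x, ∑ i ∈ range m, (x - t) ^ i * x ^ (m - 1 - i) = H m * x ^ m := by
  rw [intervalIntegral.integral_comp_sub_left (fun u => ∑ i ∈ range m, u ^ i * x ^ (m - 1 - i)),
    sub_self, sub_zero, intervalIntegral.integral_finsetSum
      (fun i _ => (by fun_prop : Continuous _).intervalIntegrable _ _), H, sum_mul]
  refine sum_congr rfl fun i hi => ?_
  have hm : i + 1 + (m - 1 - i) = m := by have := mem_range.1 hi; omega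
  rw [intervalIntegral.integral_mul_const, integral_pow, zero_pow (succ_ne_zero i), sub_zero,
    div_mul_eq_mul_div, ← pow_add, hm, one_div_mul_eq_div]

theorem hasSum_harmonic_mul_pow_div_factorial (x : ℝ) :
    HasSum (fun m => H m * x ^ m / m !)
      (exp x * ∫ t in (0 : ℝ)..x, (1 - exp (-t)) / t) := by
  have hlim : ∀ t ≠ 0, HasSum (fun m => (∑ i ∈ range m, (x - t) ^ i * x ^ (m - 1 - i)) / m !)
      (exp x * ((1 - exp (-t)) / t)) := by
    intro t ht
    have hxt : x ≠ x - t := by rwa [ne_eq, eq_comm, sub_eq_self]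
    convert hasSum_geom_sum₂_div_factorial hxt using 1
    rw [sub_sub_cancel, ← mul_div_assoc, mul_sub, mul_one, ← exp_add, ← sub_eq_add_neg]
  have hbound : ∀ m, ∀ t ∈ Set.uIoc 0 x,
      ‖(∑ i ∈ range m, (x - t) ^ i * x ^ (m - 1 - i)) / (m ! : ℝ)‖ ≤
        m * |x| ^ (m - 1) / m ! := by
    intro m t ht
    rw [norm_div, norm_natCast]
    gcongr
    refine norm_geom_sum₂_le le_rfl ?_ m
    simpa using Set.abs_sub_right_of_mem_uIcc (Set.uIoc_subset_uIcc ht)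
  rw [← intervalIntegral.integral_const_mul]
  refine (intervalIntegral.hasSum_integral_of_dominated_convergence
    (fun m _ => m * |x| ^ (m - 1) / m !)
    (fun m => (by fun_prop : Continuous _).aestronglyMeasurable)
    (fun m => .of_forall (hbound m)) (.of_forall fun _ _ => summable_mul_pow_pred_div_factorial _)
    intervalIntegrable_const ?_).congr_fun fun m => ?_
  · filter_upwards [volume.ae_ne 0] with t ht _ using hlim t ht
  · rw [intervalIntegral.integral_div, integral_geom_sum₂_sub]

theorem egf_harmonic_integral_general (x : ℝ) :
    ∑' k : ℕ, H (k + 1) * x ^ (k + 1) / (Nat.factorial (k + 1)) =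
      Real.exp x * ∫ t in (0 : ℝ)..x, (1 - Real.exp (-t)) / t := by
  have h := (hasSum_nat_add_iff' 1).2 (hasSum_harmonic_mul_pow_div_factorial x)
  simpa [H] using h.tsum_eq

theorem egf_harmonic_integral (x : ℝ) (hx : 0 < x) :
    ∑' k : ℕ, H (k + 1) * x ^ (k + 1) / (Nat.factorial (k + 1)) =
      Real.exp x * ∫ t in (0 : ℝ)..x, (1 - Real.exp (-t)) / t :=
  egf_harmonic_integral_general x
end

section
/- The m-th cumulant of the number of cycles C_n of a uniformly random permutation of n elements is κ_m = ∑_{ℓ=1}^m (-1)^{ℓ-1} (ℓ-1)! S(m,ℓ) p_ℓ(n), where S(m,ℓ) are Stirling numbers of the second kind and p_ℓ(n) = ∑_{i=1}^n 1/i^ℓ; in particular κ_1 = H_n and κ_2 = H_n - ∑_{i=1}^n 1/i^2. -/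
/-! Each summand `log (1 + (e^t - 1)/c)` of the cumulant generating function has derivative
`g = e^t / (c - 1 + e^t)`, and `g' = g - g²`. Hence its `m`-th derivative is `P_m(g)` for the
polynomials `P_1 = X`, `P_{m+1} = (X - X²) P_m'`, whose coefficients obey the signed Stirling
recursion `a(m+1, ℓ) = ℓ a(m, ℓ) - (ℓ-1) a(m, ℓ-1)` solved by `(-1)^(ℓ-1) (ℓ-1)! S(m, ℓ)`.
Evaluating at `t = 0`, where `g = 1/c`, and summing over `c = 1, …, n` gives the power sums. -/

/-- Stirling numbers of the second kind. -/
def stirlingSecond : ℕ → ℕ → ℕ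
  | 0, 0 => 1
  | 0, _ + 1 => 0
  | _ + 1, 0 => 0
  | n + 1, k + 1 => (k + 1) * stirlingSecond n (k + 1) + stirlingSecond n k

/-- The power sum `p_ℓ(n) = ∑_{i=1}^n 1/i^ℓ`. -/
noncomputable def psum (n ℓ : ℕ) : ℝ := ∑ i ∈ Finset.range n, (1 / (i + 1 : ℝ)) ^ ℓ

/-- The cumulant generating function of the number of cycles `C_n` of a uniformly
random permutation of `n` elements: `log E[e^{t C_n}] = ∑_{i=1}^n log (1 + (e^t - 1)/i)`. -/
noncomputable def cgf (n : ℕ) (t : ℝ) : ℝ :=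
  ∑ i ∈ Finset.range n, Real.log (1 + (Real.exp t - 1) / (i + 1))

open Finset Real

theorem stirlingSecond_eq_nat_stirlingSecond : ∀ m k, stirlingSecond m k = Nat.stirlingSecond m k
  | 0, 0 | 0, _ + 1 | _ + 1, 0 => rfl
  | m + 1, k + 1 => by
    simp only [stirlingSecond, Nat.stirlingSecond_succ_succ,
      stirlingSecond_eq_nat_stirlingSecond m]

/-- At `ℓ = 0` the truncated subtraction makes this `S(m, 0)`, which vanishes only for `m ≥ 1`. -/
noncomputable def cumulantCoeff (m ℓ : ℕ) : ℝ :=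
  (-1 : ℝ) ^ (ℓ - 1) * (Nat.factorial (ℓ - 1)) * stirlingSecond m ℓ

theorem cumulantCoeff_succ_zero (m : ℕ) : cumulantCoeff (m + 1) 0 = 0 := by
  simp [cumulantCoeff, stirlingSecond]

theorem cumulantCoeff_eq_zero_of_lt {m ℓ : ℕ} (h : m < ℓ) : cumulantCoeff m ℓ = 0 := by
  simp [cumulantCoeff, stirlingSecond_eq_nat_stirlingSecond, Nat.stirlingSecond_eq_zero_of_lt h]

theorem cumulantCoeff_succ_succ (m ℓ : ℕ) :
    cumulantCoeff (m + 2) (ℓ + 1) =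
      (ℓ + 1) * cumulantCoeff (m + 1) (ℓ + 1) - ℓ * cumulantCoeff (m + 1) ℓ := by
  cases ℓ with
  | zero => simp [cumulantCoeff, stirlingSecond_eq_nat_stirlingSecond, Nat.stirlingSecond_one_right]
  | succ k =>
    simp only [cumulantCoeff, stirlingSecond_eq_nat_stirlingSecond, Nat.stirlingSecond_succ_succ,
      Nat.add_sub_cancel, Nat.factorial_succ]
    push_cast
    ring

noncomputable def cumulantPoly (m : ℕ) (x : ℝ) : ℝ :=
  ∑ ℓ ∈ range (m + 1), cumulantCoeff m ℓ * x ^ ℓ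

theorem cumulantPoly_one (x : ℝ) : cumulantPoly 1 x = x := by
  simp [cumulantPoly, sum_range_succ, cumulantCoeff, stirlingSecond]

/-- `P_{m+2} = (X - X²) P'_{m+1}`. -/
theorem cumulantPoly_succ_succ (m : ℕ) (x : ℝ) :
    cumulantPoly (m + 2) x =
      ∑ ℓ ∈ range (m + 2), cumulantCoeff (m + 1) ℓ * (ℓ * (x ^ ℓ - x ^ (ℓ + 1))) := by
  set b : ℕ → ℝ := fun ℓ ↦ ℓ * cumulantCoeff (m + 1) ℓ
  have hshift :
      ∑ ℓ ∈ range (m + 2), b (ℓ + 1) * x ^ (ℓ + 1) = ∑ ℓ ∈ range (m + 2), b ℓ * x ^ ℓ := by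
    have htop : b (m + 2) = 0 := by simp [b, cumulantCoeff_eq_zero_of_lt]
    have h := (sum_range_succ' (fun ℓ ↦ b ℓ * x ^ ℓ) (m + 2)).symm.trans
      (sum_range_succ (fun ℓ ↦ b ℓ * x ^ ℓ) (m + 2))
    simpa [b, htop] using h
  rw [cumulantPoly, sum_range_succ', cumulantCoeff_succ_zero, zero_mul, add_zero]
  calc ∑ ℓ ∈ range (m + 2), cumulantCoeff (m + 2) (ℓ + 1) * x ^ (ℓ + 1)
      = ∑ ℓ ∈ range (m + 2), (b (ℓ + 1) * x ^ (ℓ + 1) - b ℓ * x ^ (ℓ + 1)) := by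
        refine sum_congr rfl fun ℓ _ ↦ ?_
        simp only [b, cumulantCoeff_succ_succ]
        push_cast
        ring
    _ = ∑ ℓ ∈ range (m + 2), cumulantCoeff (m + 1) ℓ * (ℓ * (x ^ ℓ - x ^ (ℓ + 1))) := by
        rw [sum_sub_distrib, hshift, ← sum_sub_distrib]
        exact sum_congr rfl fun ℓ _ ↦ by ring

theorem HasDerivAt.cumulantPoly_comp {f : ℝ → ℝ} {t : ℝ} (hf : HasDerivAt f (f t - f t ^ 2) t)
    (m : ℕ) : HasDerivAt (fun s ↦ cumulantPoly (m + 1) (f s)) (cumulantPoly (m + 2) (f t)) t := by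
  rw [cumulantPoly_succ_succ]
  refine HasDerivAt.fun_sum fun ℓ _ ↦ ((hf.pow ℓ).const_mul _).congr_deriv ?_
  cases ℓ with
  | zero => simp
  | succ k => simp only [Nat.add_sub_cancel]; ring

theorem iteratedDeriv_sum_eq_sum_cumulantPoly {ι : Type*} (s : Finset ι) {f : ι → ℝ → ℝ}
    (hf : ∀ i ∈ s, ∀ t, HasDerivAt (f i) (f i t - f i t ^ 2) t) (k : ℕ) :
    iteratedDeriv k (fun t ↦ ∑ i ∈ s, f i t) = fun t ↦ ∑ i ∈ s, cumulantPoly (k + 1) (f i t) := by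
  induction k with
  | zero => simp [cumulantPoly_one]
  | succ k ih =>
    ext t
    rw [iteratedDeriv_succ, ih]
    exact (HasDerivAt.fun_sum fun i hi ↦ (hf i hi t).cumulantPoly_comp k).deriv

/-- The mean of the Bernoulli(1/c) law tilted by `e^{tx}`. -/
noncomputable def tiltedMean (c t : ℝ) : ℝ := exp t / (c - 1 + exp t)

theorem tiltedMean_zero (c : ℝ) : tiltedMean c 0 = 1 / c := by
  simp [tiltedMean]

theorem hasDerivAt_log_one_add_exp_sub_one_div {c : ℝ} (hc : 1 ≤ c) (t : ℝ) :
    HasDerivAt (fun s ↦ log (1 + (exp s - 1) / c)) (tiltedMean c t) t := by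
  have hc0 : c ≠ 0 := by positivity
  have hD : c - 1 + exp t ≠ 0 := by linarith [exp_pos t]
  have h := (((hasDerivAt_exp t).sub_const 1).div_const c).const_add 1
  have hrw : 1 + (exp t - 1) / c = (c - 1 + exp t) / c := by field_simp; ring
  refine (h.log (hrw ▸ div_ne_zero hD hc0)).congr_deriv ?_
  rw [hrw, tiltedMean]
  field_simp

theorem hasDerivAt_tiltedMean {c : ℝ} (hc : 1 ≤ c) (t : ℝ) :
    HasDerivAt (tiltedMean c) (tiltedMean c t - tiltedMean c t ^ 2) t := by
  have hD : 0 < c - 1 + exp t := by linarith [exp_pos t]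
  have h := (hasDerivAt_exp t).div ((hasDerivAt_exp t).const_add (c - 1)) hD.ne'
  refine h.congr_deriv ?_
  unfold tiltedMean; field_simp

theorem deriv_cgf (n : ℕ) : deriv (cgf n) = fun t ↦ ∑ i ∈ range n, tiltedMean (i + 1) t := by
  ext t
  refine (HasDerivAt.fun_sum fun i _ ↦ hasDerivAt_log_one_add_exp_sub_one_div ?_ t).deriv
  simp

theorem iteratedDeriv_cgf (n m : ℕ) :
    iteratedDeriv m (cgf n) 0 = ∑ ℓ ∈ Icc 1 m, cumulantCoeff m ℓ * psum n ℓ := by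
  cases m with
  | zero => simp [cgf]
  | succ k =>
    rw [iteratedDeriv_succ', deriv_cgf,
      iteratedDeriv_sum_eq_sum_cumulantPoly _ (fun i _ ↦ hasDerivAt_tiltedMean (by simp)) k]
    simp only [tiltedMean_zero, cumulantPoly, psum, mul_sum]
    rw [sum_comm, sum_range_eq_add_Ico _ (by omega), cumulantCoeff_succ_zero,
      Ico_add_one_right_eq_Icc]
    simp

theorem cumulant_cycles_general (n m : ℕ) :
    iteratedDeriv m (cgf n) 0 =
      ∑ ℓ ∈ Finset.Icc 1 m,
        (-1 : ℝ) ^ (ℓ - 1) * (Nat.factorial (ℓ - 1)) * stirlingSecond m ℓ * psum n ℓ ∧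
    iteratedDeriv 1 (cgf n) 0 = psum n 1 ∧
    iteratedDeriv 2 (cgf n) 0 = psum n 1 - psum n 2 := by
  refine ⟨iteratedDeriv_cgf n m, ?_, ?_⟩
  · simp [iteratedDeriv_cgf, cumulantCoeff, stirlingSecond]
  · simp [iteratedDeriv_cgf, cumulantCoeff, stirlingSecond, sum_Icc_succ_top, sub_eq_add_neg]

theorem cumulant_cycles (n m : ℕ) (hm : 1 ≤ m) :
    iteratedDeriv m (cgf n) 0 =
      ∑ ℓ ∈ Finset.Icc 1 m,
        (-1 : ℝ) ^ (ℓ - 1) * (Nat.factorial (ℓ - 1)) * stirlingSecond m ℓ * psum n ℓ ∧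
    iteratedDeriv 1 (cgf n) 0 = psum n 1 ∧
    iteratedDeriv 2 (cgf n) 0 = psum n 1 - psum n 2 :=
  cumulant_cycles_general n m
end
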